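/- arXiv:1012.4737 — 2 statements merged into one kernel-verified Lean document; each statement's English description precedes it below -/
import Mathlib

section
/- Suppose that β, α, β′ and α′ are nonzero ordinals, and that there exists an injective function f : α′ → α such that, for every K ⊆ α of order type < β, the set f⁻¹(K) has order type < β′. Then every [β, α]-compact pair (X, τ) is [β′, α′]-compact. Moreover, if τ is closed under arbitrary unions, the same conclusion holds without assuming that f is injective. -/
/-!
Given a cover indexed by `α'`, reindex it along `f` into a cover indexed by `α`, take a subcover
indexed by some `H` of order type `< β`, and pull the index set back along `f`: by hypothesis
the preimage has order type `< β'`.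

If `τ` is closed under unions, index `δ < α` carries the union of the sets indexed by `f⁻¹{δ}`.
If instead `f` is injective, index `δ` carries the set indexed by the preimage of the least
point of `I = f[α']` at or above `δ` (of `min I` if there is none), and what is pulled back is
the rounded image of `H`. The rounding is monotone on the lower closure of `I`, and if some
point of `H` lies beyond `I`, the extra value `min I` fits in as a new least element; so the
rounded image of `H` has order type at most that of `H`.
-/

open Ordinal Set Cardinal

/-- The order type of a set of ordinals, under the induced order: the unique ordinal `o`
such that `S` with the induced order is order-isomorphic to `Set.Iio o`. -/
noncomputable def otype (S : Set Ordinal) : Ordinal :=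
  sInf {o : Ordinal | Nonempty (S ≃o Set.Iio o)}

/-- `(X, τ)` is `[β, α]`-compact: every `α`-indexed cover of `X` by members of `τ`
has a subcover indexed by a subset of `α` of order type `< β`. -/
def OrdCompact (β α : Ordinal) (X : Type*) (τ : Set (Set X)) : Prop :=
  ∀ O : Ordinal → Set X,
    (∀ δ < α, O δ ∈ τ) →
    (⋃ δ ∈ Set.Iio α, O δ) = Set.univ →
    ∃ H ⊆ Set.Iio α, otype H < β ∧ (⋃ δ ∈ H, O δ) = Set.univ

universe u v

theorem otype_eq_of_orderIso {S : Set Ordinal.{u}} {o : Ordinal.{v}}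
    (h : Nonempty (S ≃o Iio o)) : otype.{u, v} S = o := by
  have hunique : {o' : Ordinal.{v} | Nonempty (S ≃o Iio o')} = {o} := by
    refine eq_singleton_iff_unique_mem.2 ⟨h, fun o' ⟨e'⟩ => ?_⟩
    have := (e'.symm.trans (Classical.choice h)).ordinalType_congr
    rwa [type_lt_Iio, type_lt_Iio, Ordinal.lift_inj] at this
  rw [otype, hunique, csInf_singleton]

theorem otype_eq_zero {S : Set Ordinal.{u}}
    (h : ∀ o : Ordinal.{v}, IsEmpty (S ≃o Iio o)) : otype.{u, v} S = 0 := by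
  have hempty : {o : Ordinal.{v} | Nonempty (S ≃o Iio o)} = ∅ :=
    eq_empty_of_forall_notMem fun o ho => (h o).false ho.some
  rw [otype, hempty, Ordinal.sInf_empty]

theorem exists_orderIso_Iio_of_typeLT_le {K H : Set Ordinal.{u}} {o : Ordinal.{v}}
    (hKH : typeLT K ≤ typeLT H) (hH : Nonempty (H ≃o Iio o)) :
    ∃ o' ≤ o, Nonempty (K ≃o Iio o') := by
  obtain ⟨e⟩ := hH
  have hle : lift.{v + 1} (typeLT K) ≤ lift.{u + 1} (typeLT (Iio o)) := by
    rw [← e.toRelIsoLT.ordinal_lift_type_eq]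
    exact Ordinal.lift_le.2 hKH
  rw [type_lt_Iio, Ordinal.lift_lift] at hle
  obtain ⟨o', ho'⟩ := mem_range_lift_of_le hle
  refine ⟨o', Ordinal.lift_le.1 (ho' ▸ hle), ?_⟩
  have : lift.{v + 1} (typeLT K) = lift.{u + 1} (typeLT (Iio o')) := by
    rw [type_lt_Iio, Ordinal.lift_lift, ho']
  obtain ⟨e'⟩ := lift_type_eq.{u + 1, v + 1, 0}.1 this
  exact ⟨.ofRelIsoLT e'⟩

theorem exists_superset_otype_lt {K H : Set Ordinal.{u}} {β : Ordinal.{v}}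
    (hKH : typeLT K ≤ typeLT H) (hH : otype.{u, v} H < β) :
    ∃ K', K ⊆ K' ∧ K' ⊆ K ∪ H ∧ otype.{u, v} K' < β := by
  by_cases hrep : ∃ o : Ordinal.{v}, Nonempty (H ≃o Iio o)
  · obtain ⟨o, hiso⟩ := hrep
    obtain ⟨o', ho'o, hiso'⟩ := exists_orderIso_Iio_of_typeLT_le hKH hiso
    refine ⟨K, subset_rfl, subset_union_left, ?_⟩
    rw [otype_eq_of_orderIso hiso']
    exact ho'o.trans_lt (otype_eq_of_orderIso hiso ▸ hH)
  · -- `otype` is `0` on sets with no order type in `Ordinal.{v}`, and then `K ∪ H` has none either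
    refine ⟨K ∪ H, subset_union_left, subset_rfl, ?_⟩
    have hjunk : otype.{u, v} (K ∪ H) = 0 := otype_eq_zero fun o => ⟨fun e => hrep <| by
      obtain ⟨o', -, hiso'⟩ :=
        exists_orderIso_Iio_of_typeLT_le (type_mono subset_union_right) ⟨e⟩
      exact ⟨o', hiso'⟩⟩
    exact hjunk ▸ zero_le.trans_lt hH

theorem typeLT_le_of_strictMonoOn {α β : Type u} [LinearOrder α] [WellFoundedLT α]
    [LinearOrder β] [WellFoundedLT β] {F : α → β} {S : Set α} {T : Set β}
    (hF : StrictMonoOn F S) (hST : MapsTo F S T) : typeLT S ≤ typeLT T :=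
  type_le_iff'.2
    ⟨(OrderEmbedding.ofStrictMono (hST.restrict F S T) fun x y h => hF x.2 y.2 h).ltEmbedding⟩

theorem MonotoneOn.strictMonoOn_invFunOn {α β : Type*} [Nonempty α] [LinearOrder α]
    [LinearOrder β] {f : α → β} {s : Set α} (hf : MonotoneOn f s) :
    StrictMonoOn (Function.invFunOn f s) (f '' s) := by
  intro y hy z hz hyz
  by_contra hzy
  have := hf (Function.invFunOn_mem hz) (Function.invFunOn_mem hy) (not_lt.1 hzy)
  rw [Function.invFunOn_eq hz, Function.invFunOn_eq hy] at this
  exact this.not_gt hyz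

theorem typeLT_insert_le {A C : Set Ordinal.{u}} {e : Ordinal.{u} → Ordinal.{u}}
    {m b : Ordinal.{u}}
    (he : StrictMonoOn e A) (heC : MapsTo e A C) (hm : ∀ a ∈ A, m ≤ a) (hbC : b ∈ C)
    (hb : ∀ a ∈ A, e a < b) : typeLT ↥(insert m A : Set Ordinal.{u}) ≤ typeLT C := by
  classical
  -- `m` goes to `min C`, and `a ∈ A` to the least point of `C` above `e a`
  have hnext : ∀ a ∈ A, sInf {z ∈ C | e a < z} ∈ C ∧ e a < sInf {z ∈ C | e a < z} ∧
      ∀ z ∈ C, e a < z → sInf {z ∈ C | e a < z} ≤ z := fun a ha =>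
    have hne : {z ∈ C | e a < z}.Nonempty := ⟨b, hbC, hb a ha⟩
    ⟨(csInf_mem hne).1, (csInf_mem hne).2, fun z hz hlt => csInf_le' ⟨hz, hlt⟩⟩
  let F : Ordinal.{u} → Ordinal.{u} := fun x =>
    if x ∈ A ∧ x ≠ m then sInf {z ∈ C | e x < z} else sInf C
  have hFC : MapsTo F (insert m A) C := by
    intro x _
    by_cases hx : x ∈ A ∧ x ≠ m
    · simpa only [F, if_pos hx] using (hnext x hx.1).1
    · simpa only [F, if_neg hx] using csInf_mem ⟨b, hbC⟩
  refine typeLT_le_of_strictMonoOn (fun x hx y hy hxy => ?_) hFC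
  have hmy : m < y := (hx.elim (fun h => h.ge) (hm x)).trans_lt hxy
  have hyA : y ∈ A ∧ y ≠ m := ⟨hy.resolve_left hmy.ne', hmy.ne'⟩
  have hFy : F y = sInf {z ∈ C | e y < z} := if_pos hyA
  have hFx_le : F x ≤ e y := by
    by_cases hx : x ∈ A ∧ x ≠ m
    · simp only [F, if_pos hx]
      exact (hnext x hx.1).2.2 _ (heC hyA.1) (he hx.1 hyA.1 hxy)
    · simp only [F, if_neg hx]
      exact csInf_le' (heC hyA.1)
  exact hFy ▸ hFx_le.trans_lt (hnext y hyA.1).2.1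

open scoped Classical in
noncomputable def roundUp (I : Set Ordinal) (δ : Ordinal) : Ordinal :=
  if δ ∈ (lowerClosure I : Set Ordinal) then sInf (I ∩ Ici δ) else sInf I

section roundUp

variable {I : Set Ordinal.{u}} {δ : Ordinal.{u}}

theorem roundUp_mem (hI : I.Nonempty) (δ : Ordinal.{u}) : roundUp I δ ∈ I := by
  unfold roundUp
  split_ifs with hδ
  · obtain ⟨a, ha, hδa⟩ := hδ
    exact (csInf_mem ⟨a, ha, hδa⟩ : sInf (I ∩ Ici δ) ∈ I ∩ Ici δ).1
  · exact csInf_mem hI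

theorem roundUp_of_mem (hδ : δ ∈ I) : roundUp I δ = δ := by
  rw [roundUp, if_pos (subset_lowerClosure hδ)]
  exact IsLeast.csInf_eq ⟨⟨hδ, mem_Ici.2 le_rfl⟩, fun _ hx => hx.2⟩

theorem roundUp_of_notMem (hδ : δ ∉ lowerClosure I) : roundUp I δ = sInf I :=
  if_neg hδ

theorem monotoneOn_roundUp : MonotoneOn (roundUp I) (lowerClosure I) := by
  intro δ₁ h₁ δ₂ h₂ h₁₂
  rw [roundUp, roundUp, if_pos h₁, if_pos h₂]
  obtain ⟨a, ha, h₂a⟩ := h₂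
  exact csInf_le_csInf (OrderBot.bddBelow _) ⟨a, ha, h₂a⟩
    (inter_subset_inter_right _ (Ici_subset_Ici.2 h₁₂))

theorem typeLT_image_roundUp_le (hI : I.Nonempty) (H : Set Ordinal.{u}) :
    typeLT (roundUp I '' H) ≤ typeLT H := by
  by_cases hH : H ⊆ lowerClosure I
  · exact typeLT_le_of_strictMonoOn (monotoneOn_roundUp.mono hH).strictMonoOn_invFunOn
      fun _ hy => Function.invFunOn_mem hy
  obtain ⟨b, hbH, hb⟩ := not_subset.1 hH
  have himage : roundUp I '' H ⊆ insert (sInf I) (roundUp I '' (H ∩ lowerClosure I)) := by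
    rintro _ ⟨δ, hδ, rfl⟩
    by_cases hδI : δ ∈ lowerClosure I
    · exact Or.inr ⟨δ, ⟨hδ, hδI⟩, rfl⟩
    · exact Or.inl (roundUp_of_notMem hδI)
  refine (type_mono himage).trans <| typeLT_insert_le
    (monotoneOn_roundUp.mono inter_subset_right).strictMonoOn_invFunOn
    (fun _ hy => (Function.invFunOn_mem hy).1) ?_ hbH fun _ hy => ?_
  · rintro _ ⟨δ, -, rfl⟩
    exact csInf_le' (roundUp_mem hI δ)
  · by_contra hby
    exact hb ((lowerClosure I).lower (not_lt.1 hby) (Function.invFunOn_mem hy).2)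

end roundUp

section transfer

variable {β α β' α' : Ordinal} {X : Type*} {τ : Set (Set X)} {f : Ordinal → Ordinal}

theorem OrdCompact.of_injOn (hα' : α' ≠ 0) (hmaps : MapsTo f (Iio α') (Iio α))
    (hinj : InjOn f (Iio α'))
    (hpull : ∀ K ⊆ Iio α, otype K < β → otype (Iio α' ∩ f ⁻¹' K) < β')
    (hcomp : OrdCompact β α X τ) : OrdCompact β' α' X τ := by
  intro O' hO' hcov'
  set I := f '' Iio α'
  have hI : I.Nonempty := ⟨f 0, 0, pos_iff_ne_zero.2 hα', rfl⟩
  set g : Ordinal → Ordinal := fun δ => Function.invFunOn f (Iio α') (roundUp I δ)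
  have hg : ∀ δ, g δ < α' ∧ f (g δ) = roundUp I δ := fun δ =>
    ⟨Function.invFunOn_mem (roundUp_mem hI δ), Function.invFunOn_eq (roundUp_mem hI δ)⟩
  have hgf : ∀ δ' ∈ Iio α', g (f δ') = δ' := fun δ' hδ' => by
    change Function.invFunOn f _ (roundUp I (f δ')) = δ'
    rw [roundUp_of_mem (mem_image_of_mem f hδ')]
    exact hinj.leftInvOn_invFunOn hδ'
  have hcov : ⋃ δ ∈ Iio α, O' (g δ) = Set.univ := univ_subset_iff.1 <| hcov' ▸
    iUnion₂_mono' fun δ' hδ' => ⟨f δ', hmaps hδ', (congrArg O' (hgf δ' hδ')).superset⟩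
  obtain ⟨H, hHα, hHβ, hHcov⟩ := hcomp (fun δ => O' (g δ)) (fun δ _ => hO' _ (hg δ).1) hcov
  obtain ⟨K, hHK, hK, hKβ⟩ := exists_superset_otype_lt (typeLT_image_roundUp_le hI H) hHβ
  have hKα : K ⊆ Iio α := hK.trans <| union_subset
    (by rintro _ ⟨δ, -, rfl⟩; exact hmaps.image_subset (roundUp_mem hI δ)) hHα
  refine ⟨Iio α' ∩ f ⁻¹' K, inter_subset_left, hpull K hKα hKβ, ?_⟩
  exact univ_subset_iff.1 <| hHcov ▸ iUnion₂_mono' fun δ hδ =>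
    ⟨g δ, ⟨(hg δ).1, by rw [mem_preimage, (hg δ).2]; exact hHK (mem_image_of_mem _ hδ)⟩,
      subset_rfl⟩

theorem OrdCompact.of_sUnion_mem (hmaps : MapsTo f (Iio α') (Iio α))
    (hpull : ∀ K ⊆ Iio α, otype K < β → otype (Iio α' ∩ f ⁻¹' K) < β')
    (hunion : ∀ S ⊆ τ, ⋃₀ S ∈ τ) (hcomp : OrdCompact β α X τ) : OrdCompact β' α' X τ := by
  intro O' hO' hcov'
  set O : Ordinal → Set X := fun δ => ⋃₀ (O' '' (Iio α' ∩ f ⁻¹' {δ}))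
  have hcov : ⋃ δ ∈ Iio α, O δ = Set.univ := univ_subset_iff.1 <| hcov' ▸
    iUnion₂_mono' fun δ' hδ' => ⟨f δ', hmaps hδ', subset_sUnion_of_mem ⟨δ', ⟨hδ', rfl⟩, rfl⟩⟩
  obtain ⟨H, hHα, hHβ, hHcov⟩ := hcomp O
    (fun δ _ => hunion _ (image_subset_iff.2 fun δ' hδ' => hO' δ' hδ'.1)) hcov
  refine ⟨Iio α' ∩ f ⁻¹' H, inter_subset_left, hpull H hHα hHβ, eq_univ_of_forall fun x => ?_⟩
  obtain ⟨δ, hδ, _, ⟨δ', ⟨hδ'α, hfδ'⟩, rfl⟩, hx⟩ := mem_iUnion₂.1 (hHcov ▸ mem_univ x)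
  exact mem_iUnion₂.2 ⟨δ', ⟨hδ'α, mem_preimage.2 (hfδ' ▸ hδ)⟩, hx⟩

end transfer

theorem ordCompact_transfer_general {β α β' α' : Ordinal}
    (hα' : α' ≠ 0)
    {X : Type*} {τ : Set (Set X)} {f : Ordinal → Ordinal}
    (hmaps : Set.MapsTo f (Set.Iio α') (Set.Iio α))
    (hpull : ∀ K ⊆ Set.Iio α, otype K < β → otype (Set.Iio α' ∩ f ⁻¹' K) < β') :
    (Set.InjOn f (Set.Iio α') →
      OrdCompact β α X τ → OrdCompact β' α' X τ) ∧
    ((∀ S ⊆ τ, ⋃₀ S ∈ τ) →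
      OrdCompact β α X τ → OrdCompact β' α' X τ) :=
  ⟨fun hinj => .of_injOn hα' hmaps hinj hpull, fun hunion => .of_sUnion_mem hmaps hpull hunion⟩

/-- Proposition 2.5: if there is a function `f : α' → α` such that preimages of sets of order
type `< β` have order type `< β'`, then `[β, α]`-compactness implies `[β', α']`-compactness,
provided either `f` is injective, or `τ` is closed under unions. -/
theorem ordCompact_transfer {β α β' α' : Ordinal}
    (hβ : β ≠ 0) (hα : α ≠ 0) (hβ' : β' ≠ 0) (hα' : α' ≠ 0)
    {X : Type*} {τ : Set (Set X)} {f : Ordinal → Ordinal}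
    (hmaps : Set.MapsTo f (Set.Iio α') (Set.Iio α))
    (hpull : ∀ K ⊆ Set.Iio α, otype K < β → otype (Set.Iio α' ∩ f ⁻¹' K) < β') :
    (Set.InjOn f (Set.Iio α') →
      OrdCompact β α X τ → OrdCompact β' α' X τ) ∧
    ((∀ S ⊆ τ, ⋃₀ S ∈ τ) →
      OrdCompact β α X τ → OrdCompact β' α' X τ) :=
  ordCompact_transfer_general hα' hmaps hpull
end

section
/- Let β ≤ α be nonzero ordinals with α infinite, X a nonempty set, and τ a nonempty family of subsets of X. If (X, τ) is [β, α]-compact, then (X, τ) is [β, α + 1]-compact (and hence [β, α + n]-compact for every n < ω). -/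
/-!
Reindex a cover `(O δ)_{δ ≤ α}` as an `α`-sequence with `O α` in front (possible as `1 + α = α`):
`[β, α]`-compactness yields `T ⊆ α` of order type `ε < β` such that `O α` and `(O δ)_{δ ∈ T}`
cover. Then list `(O δ)_{δ ∈ T}` increasingly and repeat `O α` at every index of `[ε, α)`, which
is nonempty as `ε < β ≤ α`. A second application gives a subcover of order type `< β`; collapsing
its indices `≥ ε` to the single index `α` is a monotone reindexing, and monotone images of
well-orders do not have larger order type.
-/

open Ordinal Set Cardinal

universe u

theorem nonempty_orderIso_Iio_iff_type_eq_lift {S : Set Ordinal.{u}} {o : Ordinal.{u}} :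
    Nonempty (S ≃o Iio o) ↔ typeLT S = lift.{u + 1} o := by
  rw [← type_lt_Iio, type_eq]
  exact ⟨fun ⟨e⟩ ↦ ⟨e.toRelIsoLT⟩, fun ⟨e⟩ ↦ ⟨.ofRelIsoLT e⟩⟩

theorem lift_otype {S : Set Ordinal.{u}} {γ : Ordinal.{u}} (hS : S ⊆ Iio γ) :
    lift.{u + 1} (otype.{u, u} S) = typeLT S := by
  have hle : typeLT S ≤ lift.{u + 1} γ :=
    type_lt_Iio γ ▸
      (OrderEmbedding.ofStrictMono (inclusion hS) fun _ _ h ↦ h).ltEmbedding.ordinal_type_le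
  obtain ⟨o, ho⟩ := mem_range_lift_of_le hle
  have : {o' : Ordinal | Nonempty (S ≃o Iio o')} = {o} := by
    ext o'
    simp [nonempty_orderIso_Iio_iff_type_eq_lift, ← ho, Ordinal.lift_inj, eq_comm]
  rw [otype, this, csInf_singleton, ho]

theorem nonempty_orderIso_otype {S : Set Ordinal.{u}} {γ : Ordinal.{u}} (hS : S ⊆ Iio γ) :
    Nonempty (S ≃o Iio (otype.{u, u} S)) :=
  nonempty_orderIso_Iio_iff_type_eq_lift.2 (lift_otype hS).symm

theorem otype_le_of_strictMonoOn {S T : Set Ordinal.{u}} {γ γ' : Ordinal.{u}}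
    (hS : S ⊆ Iio γ) (hT : T ⊆ Iio γ') {f : Ordinal.{u} → Ordinal.{u}} (hf : StrictMonoOn f S)
    (hfST : MapsTo f S T) : otype.{u, u} S ≤ otype.{u, u} T := by
  rw [← Ordinal.lift_le.{u + 1}, lift_otype hS, lift_otype hT]
  exact (OrderEmbedding.ofStrictMono (hfST.restrict f S T) fun a b h ↦ hf a.2 b.2 h)
    |>.ltEmbedding.ordinal_type_le

theorem otype_mono {S T : Set Ordinal.{u}} {γ : Ordinal.{u}} (hT : T ⊆ Iio γ) (hST : S ⊆ T) :
    otype.{u, u} S ≤ otype.{u, u} T :=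
  otype_le_of_strictMonoOn (hST.trans hT) hT strictMonoOn_id hST

theorem otype_image_le_of_monotoneOn {S : Set Ordinal.{u}} {γ γ' : Ordinal.{u}}
    {k : Ordinal.{u} → Ordinal.{u}} (hS : S ⊆ Iio γ) (hkS : k '' S ⊆ Iio γ') (hk : MonotoneOn k S) :
    otype.{u, u} (k '' S) ≤ otype.{u, u} S := by
  classical
  refine otype_le_of_strictMonoOn hkS hS (f := Function.invFunOn k S) ?_ ?_
  · rintro _ ⟨x, hx, rfl⟩ _ ⟨y, hy, rfl⟩ hxy
    refine lt_of_not_ge fun hyx ↦ hxy.not_ge ?_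
    rw [← Function.invFunOn_eq (f := k) ⟨x, hx, rfl⟩,
      ← Function.invFunOn_eq (f := k) ⟨y, hy, rfl⟩]
    exact hk (Function.invFunOn_mem ⟨y, hy, rfl⟩) (Function.invFunOn_mem ⟨x, hx, rfl⟩) hyx
  · rintro _ ⟨x, hx, rfl⟩
    exact Function.invFunOn_mem ⟨x, hx, rfl⟩

theorem biUnion_eq_univ_of_subset {ι X : Type*} {O : ι → Set X} {s t : Set ι} (hst : s ⊆ t)
    (hs : ⋃ i ∈ s, O i = Set.univ) : ⋃ i ∈ t, O i = Set.univ :=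
  eq_univ_of_univ_subset (hs ▸ biUnion_subset_biUnion_left hst)

namespace OrdCompact

variable {β α : Ordinal.{u}} {X : Type*} {τ : Set (Set X)}

theorem exists_image_subcover_of_monotoneOn (h : OrdCompact β α X τ) {α' : Ordinal.{u}}
    {O : Ordinal.{u} → Set X} {k : Ordinal.{u} → Ordinal.{u}} (hk : MonotoneOn k (Iio α))
    (hkα : MapsTo k (Iio α) (Iio α')) (hOτ : ∀ δ < α, O (k δ) ∈ τ)
    (hcov : ⋃ δ ∈ Iio α, O (k δ) = Set.univ) :
    ∃ H ⊆ Iio α', otype H < β ∧ ⋃ δ ∈ H, O δ = Set.univ := by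
  obtain ⟨H, hHα, hHβ, hHcov⟩ := h (fun δ ↦ O (k δ)) hOτ hcov
  have hkH : k '' H ⊆ Iio α' := (hkα.mono_left hHα).image_subset
  exact ⟨k '' H, hkH, (otype_image_le_of_monotoneOn hHα hkH (hk.mono hHα)).trans_lt hHβ,
    biUnion_image.trans hHcov⟩

theorem exists_subcover_of_insert_cover (h : OrdCompact β α X τ) (hβα : β ≤ α)
    {O : Ordinal.{u} → Set X} {T : Set Ordinal.{u}} (hT : T ⊆ Iio α) (hTβ : otype T < β)
    (hOτ : ∀ δ < α + 1, O δ ∈ τ) (hcov : ⋃ δ ∈ insert α T, O δ = Set.univ) :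
    ∃ H ⊆ Iio (α + 1), otype H < β ∧ ⋃ δ ∈ H, O δ = Set.univ := by
  obtain ⟨e⟩ := nonempty_orderIso_otype hT
  have hε : otype T < α := hTβ.trans_le hβα
  -- list `T` increasingly, then fill the remaining indices up to `α` with `α`
  let k : Ordinal.{u} → Ordinal.{u} := fun δ ↦ if hδ : δ < otype T then e.symm ⟨δ, hδ⟩ else α
  have hk_mem (δ : Ordinal) : k δ ∈ insert α T := by
    unfold k
    split_ifs
    exacts [Or.inr (e.symm _).2, Or.inl rfl]
  have hk_lt (δ : Ordinal) : k δ < α + 1 := by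
    rcases hk_mem δ with hδ | hδ
    · exact hδ ▸ lt_add_one α
    · exact (hT hδ).trans (lt_add_one α)
  have hk_mono : Monotone k := by
    intro δ δ' hδδ'
    unfold k
    split_ifs with h h' h'
    · exact e.symm.monotone hδδ'
    · exact (hT (e.symm _).2).le
    · exact absurd (hδδ'.trans_lt h') h
    · exact le_rfl
  have hk_surj : insert α T ⊆ k '' Iio α := by
    rintro _ (rfl | ht)
    · exact ⟨otype T, hε, by simp [k]⟩
    · refine ⟨e ⟨_, ht⟩, (e _).2.trans hε, ?_⟩
      rw [show k (e ⟨_, ht⟩) = _ from dif_pos (e ⟨_, ht⟩).2]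
      exact congrArg Subtype.val (e.symm_apply_apply ⟨_, ht⟩)
  exact h.exists_image_subcover_of_monotoneOn (hk_mono.monotoneOn _) (fun δ _ ↦ hk_lt δ)
    (fun δ _ ↦ hOτ _ (hk_lt δ))
    (biUnion_image.symm.trans (biUnion_eq_univ_of_subset hk_surj hcov))

theorem exists_insert_subcover (h : OrdCompact β α X τ) (hα : ω ≤ α) {O : Ordinal.{u} → Set X}
    (hOτ : ∀ δ < α + 1, O δ ∈ τ) (hcov : ⋃ δ ∈ Iio (α + 1), O δ = Set.univ) :
    ∃ T ⊆ Iio α, otype T < β ∧ ⋃ δ ∈ insert α T, O δ = Set.univ := by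
  -- since `1 + α = α`, shifting the indices below `α` by one frees the index `0` for `α`
  let k : Ordinal.{u} → Ordinal.{u} := fun δ ↦ if δ = 0 then α else δ - 1
  have hk_lt (δ : Ordinal) (hδ : δ < α) : k δ < α + 1 := by
    unfold k
    split_ifs
    exacts [lt_add_one α, (sub_le_self δ 1).trans_lt (hδ.trans (lt_add_one α))]
  have hk_surj : Iio (α + 1) ⊆ k '' Iio α := by
    rintro η (hη : η < α + 1)
    rcases (Order.lt_add_one_iff.1 hη).eq_or_lt with rfl | hη
    · exact ⟨0, omega0_pos.trans_le hα, by simp [k]⟩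
    · refine ⟨1 + η, ?_, by simp [k]⟩
      simpa [one_add_of_omega0_le hα] using (add_lt_add_iff_left 1).2 hη
  obtain ⟨H, hHα, hHβ, hHcov⟩ := h (fun δ ↦ O (k δ)) (fun δ hδ ↦ hOτ _ (hk_lt δ hδ))
    (biUnion_image.symm.trans (biUnion_eq_univ_of_subset hk_surj hcov))
  have hH₀ : H \ {0} ⊆ Iio α := sdiff_subset.trans hHα
  have hkH₀ : k '' (H \ {0}) ⊆ Iio α := by
    rintro _ ⟨δ, ⟨hδ, hδ₀ : δ ≠ 0⟩, rfl⟩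
    simpa [k, hδ₀] using (sub_le_self δ 1).trans_lt (hHα hδ)
  have hk_mono : MonotoneOn k (H \ {0}) := by
    rintro δ ⟨-, hδ₀ : δ ≠ 0⟩ δ' ⟨-, hδ'₀ : δ' ≠ 0⟩ hδδ'
    simpa [k, hδ₀, hδ'₀] using sub_le.2 (hδδ'.trans (le_add_sub δ' 1))
  have hkH : k '' H ⊆ insert α (k '' (H \ {0})) := by
    rintro _ ⟨δ, hδ, rfl⟩
    by_cases hδ₀ : δ = 0
    · simp [k, hδ₀]
    · exact Or.inr ⟨δ, ⟨hδ, hδ₀⟩, rfl⟩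
  have hTβ : otype (k '' (H \ {0})) < β :=
    calc otype (k '' (H \ {0})) ≤ otype (H \ {0}) := otype_image_le_of_monotoneOn hH₀ hkH₀ hk_mono
      _ ≤ otype H := otype_mono hHα sdiff_subset
      _ < β := hHβ
  exact ⟨k '' (H \ {0}), hkH₀, hTβ,
    biUnion_eq_univ_of_subset hkH (biUnion_image.trans hHcov)⟩

theorem add_one (h : OrdCompact β α X τ) (hβα : β ≤ α) (hα : ω ≤ α) :
    OrdCompact β (α + 1) X τ := fun _ hOτ hcov ↦
  have ⟨_, hT, hTβ, hTcov⟩ := h.exists_insert_subcover hα hOτ hcov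
  h.exists_subcover_of_insert_cover hβα hT hTβ hOτ hTcov

theorem add_natCast (h : OrdCompact β α X τ) (hβα : β ≤ α) (hα : ω ≤ α) (n : ℕ) :
    OrdCompact β (α + n) X τ := by
  induction n with
  | zero => simpa using h
  | succ n ih =>
    rw [Nat.cast_succ, ← add_assoc]
    exact ih.add_one (hβα.trans le_self_add) (hα.trans le_self_add)

end OrdCompact

theorem ordCompact_add_one_general {β α : Ordinal} (hβα : β ≤ α) (hα : ω ≤ α)
    {X : Type*} {τ : Set (Set X)}
    (h : OrdCompact β α X τ) :
    OrdCompact β (α + 1) X τ ∧ ∀ n : ℕ, OrdCompact β (α + n) X τ :=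
  ⟨h.add_one hβα hα, h.add_natCast hβα hα⟩

/-- Corollary 2.7(1): if `β ≤ α` are nonzero ordinals with `α` infinite, then
`[β, α]`-compactness implies `[β, α + 1]`-compactness, hence `[β, α + n]`-compactness
for every `n < ω`. -/
theorem ordCompact_add_one {β α : Ordinal} (hβ : β ≠ 0) (hβα : β ≤ α) (hα : ω ≤ α)
    {X : Type*} (hX : Nonempty X) {τ : Set (Set X)} (hτ : τ.Nonempty)
    (h : OrdCompact β α X τ) :
    OrdCompact β (α + 1) X τ ∧ ∀ n : ℕ, OrdCompact β (α + n) X τ :=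
  ordCompact_add_one_general hβα hα h
end
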